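/- Schmidt-rank lower bound from a restricted bilinear core: let f : {0,1}^a × {0,1}^b → {0,1} and define R_{u,v} = (-1)^{f(u,v)}. Suppose there exist index subsets I ⊆ {1,…,a}, J ⊆ {1,…,b} and assignments β, α of the remaining bits such that the restricted function f̃(x,y) = f(u,v) with u_I = x, u_{A∖I} = β, v_J = y, v_{B∖J} = α can be written as f̃(x,y) = xᵀΓy ⊕ φ(x) ⊕ ψ(y) for some Γ ∈ 𝔽₂^{|I|×|J|} with rank_{𝔽₂}(Γ) = t. Then rank_ℝ(R) ≥ 2^t. -/

import Mathlib

open Matrix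

/-! On the core, `R` restricts to `diag(±1) · H · diag(±1)` with `H x y = (-1)^(x ⬝ Γ y)`.
Column `y` of `H` is the additive character of `𝔽₂^I` attached to `Γ y`, and distinct characters
are linearly independent, so the rank of `H` is the number of vectors in the image of `Γ`,
namely `2^t`. -/

/-- Sign of a bit: `(-1)^c` as a real number. -/
def sgn (c : ZMod 2) : ℝ := if c = 0 then 1 else -1

lemma ZMod.eq_zero_or_eq_one (c : ZMod 2) : c = 0 ∨ c = 1 := by
  revert c; decide

lemma sgn_zero : sgn 0 = 1 := if_pos rfl

lemma sgn_one : sgn 1 = -1 := if_neg one_ne_zero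

lemma sgn_add (c d : ZMod 2) : sgn (c + d) = sgn c * sgn d := by
  rcases c.eq_zero_or_eq_one with rfl | rfl <;>
    rcases d.eq_zero_or_eq_one with rfl | rfl <;>
    simp [sgn_zero, sgn_one, CharTwo.add_self_eq_zero]

lemma sgn_injective : Function.Injective sgn := by
  intro c d h
  rcases c.eq_zero_or_eq_one with rfl | rfl <;>
    rcases d.eq_zero_or_eq_one with rfl | rfl <;>
    first | rfl | norm_num [sgn_zero, sgn_one] at h

lemma sgn_ne_zero (c : ZMod 2) : sgn c ≠ 0 := by
  unfold sgn; split_ifs <;> norm_num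

section DotProductChar

variable {ι : Type*} [Fintype ι]

def dotProductChar (u : ι → ZMod 2) : AddChar (ι → ZMod 2) ℝ where
  toFun x := sgn (x ⬝ᵥ u)
  map_zero_eq_one' := by simp [sgn]
  map_add_eq_mul' x y := by rw [add_dotProduct, sgn_add]

lemma dotProductChar_apply (u x : ι → ZMod 2) : dotProductChar u x = sgn (x ⬝ᵥ u) := rfl

lemma dotProductChar_injective [DecidableEq ι] :
    Function.Injective (dotProductChar : (ι → ZMod 2) → AddChar (ι → ZMod 2) ℝ) := by
  intro u v h
  funext i
  have := DFunLike.congr_fun h (Pi.single i 1)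
  simpa [dotProductChar_apply, single_dotProduct, sgn_injective.eq_iff] using this

end DotProductChar

lemma rank_diagonal_mul_mul_diagonal {m n K : Type*} [Fintype m] [Fintype n] [DecidableEq m]
    [DecidableEq n] [Field K] (d : m → K) (A : Matrix m n K) (e : n → K)
    (hd : ∀ i, d i ≠ 0) (he : ∀ j, e j ≠ 0) :
    (diagonal d * A * diagonal e).rank = A.rank := by
  rw [rank_mul_eq_left_of_isUnit_det, rank_mul_eq_right_of_isUnit_det] <;>
    simp [det_diagonal, Finset.prod_ne_zero_iff, hd, he]

lemma natCard_range_mulVec {m n K : Type*} [Fintype m] [Fintype n] [Field K] [Finite K]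
    (A : Matrix m n K) : Nat.card (Set.range A.mulVec) = Nat.card K ^ A.rank :=
  Module.natCard_eq_pow_finrank (K := K) (V := LinearMap.range A.mulVecLin)

lemma rank_of_sgn_dotProduct_mulVec_eq_two_pow_rank {m n : Type*} [Fintype m] [Fintype n]
    [DecidableEq m] [DecidableEq n] (Γ : Matrix m n (ZMod 2)) :
    (Matrix.of fun x y => sgn (x ⬝ᵥ Γ *ᵥ y)).rank = 2 ^ Γ.rank := by
  have hcols : Set.range (Matrix.of fun x y => sgn (x ⬝ᵥ Γ *ᵥ y)).col
      = Set.range fun w : Set.range Γ.mulVec => ⇑(dotProductChar (w : m → ZMod 2)) := by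
    change Set.range ((fun w => ⇑(dotProductChar w)) ∘ Γ.mulVec) = _
    rw [Set.range_comp, Set.image_eq_range]
  have hli :
      LinearIndependent ℝ fun w : Set.range Γ.mulVec => ⇑(dotProductChar (w : m → ZMod 2)) :=
    (AddChar.linearIndependent _ ℝ).comp _ (dotProductChar_injective.comp Subtype.val_injective)
  rw [rank_eq_finrank_span_cols, hcols, finrank_span_eq_card hli,
    ← Nat.card_eq_fintype_card, natCard_range_mulVec, Nat.card_zmod]

theorem schmidt_rank_lower_bound_from_core (a b t : ℕ)
    (f : (Fin a → ZMod 2) → (Fin b → ZMod 2) → ZMod 2)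
    (R : Matrix (Fin a → ZMod 2) (Fin b → ZMod 2) ℝ)
    (hR : ∀ u v, R u v = sgn (f u v))
    (I : Finset (Fin a)) (J : Finset (Fin b))
    (β : {i : Fin a // i ∉ I} → ZMod 2) (α : {j : Fin b // j ∉ J} → ZMod 2)
    (Γ : Matrix {i : Fin a // i ∈ I} {j : Fin b // j ∈ J} (ZMod 2))
    (φ : ({i : Fin a // i ∈ I} → ZMod 2) → ZMod 2)
    (ψ : ({j : Fin b // j ∈ J} → ZMod 2) → ZMod 2)
    (hcore : ∀ (x : {i : Fin a // i ∈ I} → ZMod 2) (y : {j : Fin b // j ∈ J} → ZMod 2),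
      f (fun i => if h : i ∈ I then x ⟨i, h⟩ else β ⟨i, h⟩)
        (fun j => if h : j ∈ J then y ⟨j, h⟩ else α ⟨j, h⟩)
        = x ⬝ᵥ Γ.mulVec y + φ x + ψ y)
    (hΓ : Γ.rank = t) :
    2 ^ t ≤ R.rank := by
  set H : Matrix _ _ ℝ := Matrix.of fun x y => sgn (x ⬝ᵥ Γ *ᵥ y)
  have hcore_signs : R.submatrix (fun x i => if h : i ∈ I then x ⟨i, h⟩ else β ⟨i, h⟩)
      (fun y j => if h : j ∈ J then y ⟨j, h⟩ else α ⟨j, h⟩)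
      = diagonal (sgn ∘ φ) * H * diagonal (sgn ∘ ψ) := by
    ext x y
    rw [submatrix_apply, hR, hcore, mul_diagonal, diagonal_mul, sgn_add, sgn_add]
    simp only [H, of_apply, Function.comp_apply]
    ring
  calc 2 ^ t = H.rank := by rw [← hΓ, rank_of_sgn_dotProduct_mulVec_eq_two_pow_rank]
    _ = (diagonal (sgn ∘ φ) * H * diagonal (sgn ∘ ψ)).rank :=
      (rank_diagonal_mul_mul_diagonal _ _ _ (fun _ => sgn_ne_zero _) fun _ => sgn_ne_zero _).symm
    _ ≤ R.rank := hcore_signs ▸ rank_submatrix_le _ _ _
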